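/- arXiv:1901.00118 — 2 statements merged into one kernel-verified Lean document; each statement's English description precedes it below -/
import Mathlib

section
/- For every odd prime q and every positive integer m, the set of prime numbers l such that m divides l - 1 and the q-adic valuation of l - 1 equals the q-adic valuation of m is infinite. -/
/-!
Take `k ∈ {1, 2}` with `q ∤ k(km + 1)` (possible because `q ∤ 2`) and put `a = km + 1`.
Then `a` is a unit modulo `qm`, and Dirichlet's theorem gives infinitely many primes
`l ≡ a [MOD qm]`. For those, `l - 1 = km + qm·t`; the term `qm·t` is divisible by
`q ^ (v_q(m) + 1)`, so it does not change the valuation `v_q(km) = v_q(m)`.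
-/

lemma exists_not_dvd_and_not_dvd_mul_add_one {q : ℕ} (hq : ¬q ∣ 2) (m : ℕ) :
    ∃ k, ¬q ∣ k ∧ ¬q ∣ k * m + 1 := by
  have hq1 : ¬q ∣ 1 := fun h => hq (h.trans (one_dvd 2))
  by_cases h : q ∣ 1 * m + 1
  · refine ⟨2, hq, fun h' => hq1 ((Nat.dvd_add_right h').mp ?_)⟩
    rw [show 2 * m + 1 + 1 = 2 * (1 * m + 1) by ring]
    exact h.mul_left 2
  · exact ⟨1, hq1, h⟩

lemma padicValNat_add_of_pow_succ_dvd {p n c : ℕ} [Fact p.Prime] (hn : n ≠ 0)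
    (hc : p ^ (padicValNat p n + 1) ∣ c) : padicValNat p (n + c) = padicValNat p n := by
  have hnc : n + c ≠ 0 := by omega
  have hn_dvd : p ^ padicValNat p n ∣ n := pow_padicValNat_dvd
  apply le_antisymm
  · have h_not : ¬p ^ (padicValNat p n + 1) ∣ n + c := fun h =>
      pow_succ_padicValNat_not_dvd hn ((Nat.dvd_add_left hc).mp h)
    rw [padicValNat_dvd_iff_le hnc] at h_not
    omega
  · rw [← padicValNat_dvd_iff_le hnc]
    exact dvd_add hn_dvd ((pow_dvd_pow p (Nat.le_succ _)).trans hc)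

lemma padicValNat_mul_of_not_dvd {p k m : ℕ} [Fact p.Prime] (hk : ¬p ∣ k) (hm : m ≠ 0) :
    padicValNat p (k * m) = padicValNat p m := by
  have hk0 : k ≠ 0 := by rintro rfl; exact hk (dvd_zero p)
  rw [padicValNat.mul hk0 hm, padicValNat.eq_zero_of_not_dvd hk, zero_add]

lemma dvd_sub_one_and_padicValNat_sub_one_eq {q m k l : ℕ} [Fact q.Prime] (hm : m ≠ 0)
    (hk : ¬q ∣ k) (hl : k * m + 1 ≤ l) (hmod : l ≡ k * m + 1 [MOD q * m]) :
    m ∣ l - 1 ∧ padicValNat q (l - 1) = padicValNat q m := by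
  have hqm : q * m ∣ l - (k * m + 1) := (Nat.modEq_iff_dvd' hl).mp hmod.symm
  have hsplit : l - 1 = k * m + (l - (k * m + 1)) := by omega
  have hkm : k * m ≠ 0 := mul_ne_zero (by rintro rfl; exact hk (dvd_zero q)) hm
  refine ⟨hsplit ▸ dvd_add (dvd_mul_left m k) ((dvd_mul_left m q).trans hqm), ?_⟩
  have hpow : q ^ (padicValNat q (k * m) + 1) ∣ q * m := by
    rw [padicValNat_mul_of_not_dvd hk hm, pow_succ']
    exact Nat.mul_dvd_mul_left q pow_padicValNat_dvd
  rw [hsplit, padicValNat_add_of_pow_succ_dvd hkm (hpow.trans hqm),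
    padicValNat_mul_of_not_dvd hk hm]

/-- For every odd prime `q` and every positive integer `m`, the set of prime numbers `l`
such that `m` divides `l - 1` and the `q`-adic valuation of `l - 1` equals the `q`-adic
valuation of `m` is infinite. -/
theorem stmt_2 (q m : ℕ) (hq : q.Prime) (hq_odd : Odd q) (hm : 0 < m) :
    {l : ℕ | l.Prime ∧ m ∣ l - 1 ∧ padicValNat q (l - 1) = padicValNat q m}.Infinite := by
  have := Fact.mk hq
  have hq2 : ¬q ∣ 2 := fun h =>
    hq_odd.not_two_dvd_nat ((Nat.prime_dvd_prime_iff_eq hq Nat.prime_two).mp h ▸ dvd_rfl)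
  obtain ⟨k, hk, hka⟩ := exists_not_dvd_and_not_dvd_mul_add_one hq2 m
  set a := k * m + 1
  have ha : a.Coprime (q * m) :=
    (hq.coprime_iff_not_dvd.mpr hka).symm.mul_right
      (by simp [a, Nat.coprime_mul_right_add_left])
  have : NeZero (q * m) := ⟨mul_ne_zero hq.ne_zero hm.ne'⟩
  have hprimes :=
    Nat.infinite_setOfPred_prime_and_eq_mod ((ZMod.isUnit_iff_coprime a (q * m)).mpr ha)
  refine (hprimes.sdiff (Set.finite_le_nat a)).mono ?_
  rintro l ⟨⟨hl, hlmod⟩, hla⟩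
  exact ⟨hl, dvd_sub_one_and_padicValNat_sub_one_eq hm.ne' hk (not_le.mp hla).le
    ((ZMod.natCast_eq_natCast_iff _ _ _).mp hlmod)⟩
end

section
/- Let q be an odd prime, m a positive integer, and x a nonzero element of the ring ℤ_q of q-adic integers. Then there exists an infinite set Λ of prime numbers such that for every l ∈ Λ, m divides l - 1 and the q-adic norm of (l - 1)·x equals q^{-c}·‖x‖, where c is the q-adic valuation of m. In particular, 0 is not an adherent point of the set {(l - 1)·x : l ∈ Λ} in ℤ_q. -/
/-!
Dirichlet's theorem gives infinitely many primes `l ≡ 1 + m u (mod q m)`, where `u ∈ {1, 2}`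
is chosen so that `q ∤ u` and `q ∤ 1 + m u` (possible since `q ≥ 3`), making `1 + m u` a unit
modulo `q m`. For such `l` we have `l - 1 = m (u + q k)` with `u + q k` a `q`-adic unit, so
`‖(l - 1) x‖ = ‖m‖ ‖x‖ = q ^ (-c) ‖x‖`. The points `(l - 1) x` thus lie on a sphere of positive
radius around `0`, which is closed and misses `0`.
-/

namespace PadicInt

variable {q : ℕ} [Fact q.Prime]

theorem norm_natCast_eq_zpow_neg_padicValNat {n : ℕ} (hn : n ≠ 0) :
    ‖(n : ℤ_[q])‖ = (q : ℝ) ^ (-(padicValNat q n : ℤ)) := by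
  rw [norm_def, coe_natCast, Padic.norm_eq_zpow_neg_valuation (by exact_mod_cast hn),
    Padic.valuation_natCast]

theorem norm_natCast_sub_one_of_modEq {m u l : ℕ} (hu : ¬ q ∣ u)
    (hl : l ≡ 1 + m * u [MOD q * m]) : ‖(l : ℤ_[q]) - 1‖ = ‖(m : ℤ_[q])‖ := by
  obtain ⟨k, hk⟩ := (Nat.modEq_iff_dvd.mp hl.symm)
  have hfactor : (l : ℤ_[q]) - 1 = m * ((u + q * k : ℤ) : ℤ_[q]) := by
    have hl' : (l : ℤ) - 1 = m * (u + q * k) := by push_cast at hk; linear_combination hk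
    exact_mod_cast hl'
  have hunit : ‖((u + q * k : ℤ) : ℤ_[q])‖ = 1 := by
    refine (norm_le_one _).antisymm (not_lt.mp fun hlt => hu ?_)
    have hdvd : (q : ℤ) ∣ u + q * k := norm_intCast_lt_one_iff.mp hlt
    exact Int.natCast_dvd_natCast.mp ((dvd_add_left (dvd_mul_right _ _)).mp hdvd)
  rw [hfactor, norm_mul, hunit, mul_one]

end PadicInt

theorem Nat.exists_not_dvd_and_not_dvd_one_add_mul {q : ℕ} (hq : 3 ≤ q) (m : ℕ) :
    ∃ u, ¬ q ∣ u ∧ ¬ q ∣ 1 + m * u := by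
  have hq1 : ¬ q ∣ 1 := fun h => by have := Nat.le_of_dvd one_pos h; omega
  by_cases h : q ∣ 1 + m
  · refine ⟨2, fun h2 => by have := Nat.le_of_dvd two_pos h2; omega, fun h2 => hq1 ?_⟩
    rw [show 1 + m * 2 = (1 + m) + m by ring] at h2
    exact (Nat.dvd_add_left ((Nat.dvd_add_right h).mp h2)).mp h
  · exact ⟨1, hq1, by simpa using h⟩

theorem Nat.coprime_one_add_mul_mul_of_not_dvd {q m u : ℕ} (hq : q.Prime)
    (h : ¬ q ∣ 1 + m * u) : (1 + m * u).Coprime (q * m) :=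
  Nat.Coprime.mul_right ((hq.coprime_iff_not_dvd.mpr h).symm) (by simp)

theorem Nat.dvd_sub_one_of_modEq_one_add_mul {q m u l : ℕ} (hl : 1 ≤ l)
    (h : l ≡ 1 + m * u [MOD q * m]) : m ∣ l - 1 := by
  have hmod : 1 ≡ l [MOD m] :=
    ((Nat.modEq_iff_dvd' (by omega)).mpr (by simp)).trans (h.of_mul_left q).symm
  exact (Nat.modEq_iff_dvd' hl).mp hmod

theorem zero_notMem_closure_of_forall_norm_eq {E : Type*} [SeminormedAddCommGroup E]
    {s : Set E} {r : ℝ} (hr : r ≠ 0) (hs : ∀ y ∈ s, ‖y‖ = r) :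
    (0 : E) ∉ closure s := fun h0 => by
  have hsphere : s ⊆ Metric.sphere 0 r := fun y hy => mem_sphere_zero_iff_norm.mpr (hs y hy)
  exact hr (by simpa using (closure_minimal hsphere Metric.isClosed_sphere h0).symm)

/-- Let `q` be an odd prime, `m` a positive integer, and `x` a nonzero element of the ring
`ℤ_[q]` of `q`-adic integers. Then there exists an infinite set `Λ` of prime numbers such
that for every `l ∈ Λ`, `m` divides `l - 1` and the `q`-adic norm of `(l - 1) • x` equals
`q ^ (-c) * ‖x‖` where `c` is the `q`-adic valuation of `m`. In particular, `0` is not an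
adherent point of the set `{(l - 1) • x : l ∈ Λ}` in `ℤ_[q]`. -/
theorem stmt_5 (q m : ℕ) [Fact q.Prime] (hq_odd : Odd q) (hm : 0 < m)
    (x : ℤ_[q]) (hx : x ≠ 0) :
    ∃ Λ : Set ℕ, Λ.Infinite ∧
      (∀ l ∈ Λ, l.Prime ∧ m ∣ l - 1 ∧
        ‖((l : ℤ_[q]) - 1) * x‖ = (q : ℝ) ^ (-(padicValNat q m : ℤ)) * ‖x‖) ∧
      (0 : ℤ_[q]) ∉ closure ((fun l : ℕ => ((l : ℤ_[q]) - 1) * x) '' Λ) := by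
  have hq : q.Prime := Fact.out
  have hq3 : 3 ≤ q := by
    have := hq.two_le
    have : q ≠ 2 := by rintro rfl; exact absurd hq_odd (by decide)
    omega
  obtain ⟨u, hu, hu'⟩ := Nat.exists_not_dvd_and_not_dvd_one_add_mul hq3 m
  set Λ := {l : ℕ | l.Prime ∧ l ≡ 1 + m * u [MOD q * m]}
  have hΛ : ∀ l ∈ Λ, l.Prime ∧ m ∣ l - 1 ∧
      ‖((l : ℤ_[q]) - 1) * x‖ = (q : ℝ) ^ (-(padicValNat q m : ℤ)) * ‖x‖ := by
    rintro l ⟨hl, hlu⟩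
    refine ⟨hl, Nat.dvd_sub_one_of_modEq_one_add_mul hl.one_lt.le hlu, ?_⟩
    rw [norm_mul, PadicInt.norm_natCast_sub_one_of_modEq hu hlu,
      PadicInt.norm_natCast_eq_zpow_neg_padicValNat hm.ne']
  have hr : (q : ℝ) ^ (-(padicValNat q m : ℤ)) * ‖x‖ ≠ 0 :=
    mul_ne_zero (zpow_ne_zero _ (by exact_mod_cast hq.ne_zero)) (norm_ne_zero_iff.mpr hx)
  refine ⟨Λ, Nat.infinite_setOfPred_prime_and_modEq (by positivity)
    (Nat.coprime_one_add_mul_mul_of_not_dvd hq hu'), hΛ, ?_⟩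
  exact zero_notMem_closure_of_forall_norm_eq hr
    (Set.forall_mem_image.mpr fun l hl => (hΛ l hl).2.2)
end
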